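/- Let $K \subset \mathbb{R}^d$ be a convex body of volume $1$ and let $v(z) = \min\{V(K \cap H) : H \text{ a closed half-space with } z \in H\}$. If $C$ is a cap of $K$ whose bounding hyperplane is tangent to the floating body $K(v \geq s) = \{z \in K : v(z) \geq s\}$, then $s \leq V(C) \leq ds$. -/

import Mathlib

open MeasureTheory
open scoped RealInnerProductSpace

/-- The minimal cap volume function `v(z) = min{V(K ∩ H) : H a closed half-space, z ∈ H}`. -/
noncomputable def vfun {d : ℕ} (K : Set (EuclideanSpace ℝ (Fin d)))
    (z : EuclideanSpace ℝ (Fin d)) : ℝ :=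
  sInf {r | ∃ (u : EuclideanSpace ℝ (Fin d)) (c : ℝ), u ≠ 0 ∧ c ≤ ⟪u, z⟫ ∧
    r = (volume (K ∩ {x | c ≤ ⟪u, x⟫})).toReal}

/-!
Let `z` be a point where the hyperplane of `C` touches the floating body, and let `W` be the set
of unit normals `w` whose caps `{x | ⟪w, z⟫ ≤ ⟪w, x⟫}` through `z` have volume at most `s`. The
lower bound holds because `C` is itself a cap containing `z`.

If `0` is a convex combination of points of `W`, then by Carathéodory `K` is covered by `d + 1`
caps from `W`, so `V(K) ≤ (d + 1) s`, while the cap opposite to `C` contains `z` and so has volume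
at least `s`. Otherwise `u` lies in the closed cone generated by `W`: if not, Farkas' lemma and
the compactness of `W` give a direction from `z` into `K` along which `⟪u, ·⟫` increases while every
`⟪w, ·⟫`, `w ∈ W`, decreases; but points of `K` beyond the tangent hyperplane have `v < s`, and
their small caps converge to a cap of `W` not decreasing in that direction. By Carathéodory's
theorem for cones, `C` is then a limit of caps each covered by `d` caps of `W`.
-/

open Set Filter Topology
open scoped ENNReal

section ConeHull

variable {V : Type*} [AddCommGroup V] [Module ℝ V]

theorem PointedCone.mem_hull_finset_iff {t : Finset V} {x : V} :
    x ∈ PointedCone.hull ℝ (t : Set V) ↔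
      ∃ f : V → ℝ, (∀ e ∈ t, 0 ≤ f e) ∧ ∑ e ∈ t, f e • e = x := by
  constructor
  · intro hx
    obtain ⟨f, -, rfl⟩ := Submodule.mem_span_finset.1 hx
    exact ⟨fun e => f e, fun e _ => (f e).2, rfl⟩
  · rintro ⟨f, hf, rfl⟩
    refine Submodule.sum_mem _ fun e he => ?_
    exact (PointedCone.hull ℝ (t : Set V)).smul_mem (hf e he) (PointedCone.subset_hull he)

theorem PointedCone.exists_mem_hull_erase [FiniteDimensional ℝ V] [DecidableEq V] {t : Finset V}
    {x : V} (ht : Module.finrank ℝ V < t.card) (hx : x ∈ PointedCone.hull ℝ (t : Set V)) :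
    ∃ a ∈ t, x ∈ PointedCone.hull ℝ (t.erase a : Set V) := by
  obtain ⟨f, hf, rfl⟩ := mem_hull_finset_iff.1 hx
  obtain ⟨g, hg, hpos⟩ : ∃ g : V → ℝ, ∑ e ∈ t, g e • e = 0 ∧ ∃ e ∈ t, 0 < g e := by
    obtain ⟨g, hg, e, he, hge⟩ := Module.exists_nontrivial_relation_of_finrank_lt_card ht
    rcases hge.lt_or_gt with hneg | hpos
    · refine ⟨-g, ?_, e, he, by simpa using hneg⟩
      simp only [Pi.neg_apply, neg_smul, Finset.sum_neg_distrib, hg, neg_zero]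
    · exact ⟨g, hg, e, he, hpos⟩
  obtain ⟨a, ha, hmin⟩ := (t.filter (0 < g ·)).exists_min_image (fun e => f e / g e)
    (by simpa [Finset.Nonempty] using hpos)
  rw [Finset.mem_filter] at ha
  -- the largest multiple of the relation that can be removed keeping all weights nonnegative
  set τ := f a / g a
  refine ⟨a, ha.1, mem_hull_finset_iff.2 ⟨fun e => f e - τ * g e, fun e he => ?_, ?_⟩⟩
  · have he := Finset.mem_of_mem_erase he
    rcases le_or_gt (g e) 0 with hge | hge
    · nlinarith [hf e he, hf a ha.1, div_nonneg (hf a ha.1) ha.2.le]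
    · have := hmin e (Finset.mem_filter.2 ⟨he, hge⟩)
      rw [le_div_iff₀ hge] at this
      linarith
  · rw [Finset.sum_erase _ (by simp [τ, div_mul_cancel₀ _ ha.2.ne'])]
    simp only [sub_smul, mul_smul, Finset.sum_sub_distrib, ← Finset.smul_sum, hg, smul_zero,
      sub_zero]

theorem PointedCone.exists_finset_card_le_finrank_of_mem_hull [FiniteDimensional ℝ V]
    {s : Set V} {x : V} (hx : x ∈ PointedCone.hull ℝ s) :
    ∃ t : Finset V, ↑t ⊆ s ∧ t.card ≤ Module.finrank ℝ V ∧ x ∈ PointedCone.hull ℝ (t : Set V) := by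
  classical
  obtain ⟨t, hts, hxt⟩ := Submodule.mem_span_finite_of_mem_span hx
  induction t using Finset.strongInduction with
  | H t ih =>
    by_cases hcard : t.card ≤ Module.finrank ℝ V
    · exact ⟨t, hts, hcard, hxt⟩
    · obtain ⟨a, ha, hxa⟩ := exists_mem_hull_erase (not_le.1 hcard) hxt
      exact ih _ (Finset.erase_ssubset ha)
        ((Finset.coe_subset.2 (Finset.erase_subset _ _)).trans hts) hxa

theorem PointedCone.coe_hull_subset_convexCone_hull {S : Set V} (h0 : (0 : V) ∈ S) :
    (PointedCone.hull ℝ S : Set V) ⊆ ConvexCone.hull ℝ S :=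
  Submodule.span_le (p := (ConvexCone.hull ℝ S).toPointedCone (ConvexCone.subset_hull h0)).2
    ConvexCone.subset_hull

end ConeHull

theorem exists_stdSimplex_of_mem_convexHull {E : Type*} [NormedAddCommGroup E]
    [NormedSpace ℝ E] [FiniteDimensional ℝ E] {s : Set E} {x : E} (hx : x ∈ convexHull ℝ s) :
    ∃ w ∈ stdSimplex ℝ (Fin (Module.finrank ℝ E + 1)), ∃ z : Fin (Module.finrank ℝ E + 1) → E,
      (∀ i, z i ∈ s) ∧ ∑ i, w i • z i = x := by
  set n := Module.finrank ℝ E + 1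
  obtain ⟨ι, _, z, w, hzs, hz, hw, hw1, rfl⟩ := eq_pos_convex_span_of_mem_convexHull hx
  obtain ⟨e⟩ : Nonempty (ι ↪ Fin n) := Function.Embedding.nonempty_of_card_le <| by
    simpa [n] using hz.card_le_finrank_succ.trans (Nat.succ_le_succ (Submodule.finrank_le _))
  obtain ⟨i₀⟩ : Nonempty ι := by
    by_contra h
    simp [not_nonempty_iff.1 h] at hw1
  set w' := Function.extend e w 0
  set z' := Function.extend e z fun _ => z i₀
  have hw'e (i : ι) : w' (e i) = w i := e.injective.extend_apply _ _ i
  have hz'e (i : ι) : z' (e i) = z i := e.injective.extend_apply _ _ i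
  have hw'0 (j : Fin n) (hj : j ∉ range e) : w' j = 0 := Function.extend_apply' _ _ _ hj
  refine ⟨w', ⟨fun j => ?_, ?_⟩, z', fun j => ?_, ?_⟩
  · by_cases hj : j ∈ range e
    · obtain ⟨i, rfl⟩ := hj
      exact hw'e i ▸ (hw i).le
    · exact (hw'0 j hj).ge
  · rw [← hw1]
    exact (Fintype.sum_of_injective e e.injective w w' hw'0 fun i => (hw'e i).symm).symm
  · by_cases hj : j ∈ range e
    · obtain ⟨i, rfl⟩ := hj
      exact hz'e i ▸ hzs (mem_range_self i)
    · rw [show z' j = z i₀ from Function.extend_apply' _ _ _ hj]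
      exact hzs (mem_range_self i₀)
  · refine (Fintype.sum_of_injective e e.injective _ (fun j => w' j • z' j)
      (fun j hj => by simp only [hw'0 j hj, zero_smul]) fun i => ?_).symm
    simp only [hw'e, hz'e]

theorem isCompact_convexHull {E : Type*} [NormedAddCommGroup E] [NormedSpace ℝ E]
    [FiniteDimensional ℝ E] {s : Set E} (hs : IsCompact s) : IsCompact (convexHull ℝ s) := by
  set n := Module.finrank ℝ E + 1
  suffices convexHull ℝ s = (fun p : (Fin n → ℝ) × (Fin n → E) => ∑ i, p.1 i • p.2 i) ''
      (stdSimplex ℝ (Fin n) ×ˢ univ.pi fun _ => s) by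
    rw [this]
    exact ((isCompact_stdSimplex ℝ _).prod (isCompact_univ_pi fun _ => hs)).image (by fun_prop)
  refine Subset.antisymm (fun x hx => ?_) ?_
  · obtain ⟨w, hw, z, hzs, rfl⟩ := exists_stdSimplex_of_mem_convexHull hx
    exact ⟨(w, z), ⟨hw, fun i _ => hzs i⟩, rfl⟩
  · rintro _ ⟨⟨w, z⟩, ⟨hw, hz⟩, rfl⟩
    exact mem_convexHull_of_exists_fintype w z hw.1 hw.2 (fun i => hz i trivial) rfl

section InnerProductSpace

variable {E : Type*} [NormedAddCommGroup E] [InnerProductSpace ℝ E]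

theorem exists_inner_neg_of_notMem_closure_hull [CompleteSpace E] {S : Set E} {x : E}
    (hx : x ∉ closure (PointedCone.hull ℝ S : Set E)) :
    ∃ y, (∀ z ∈ S, 0 ≤ ⟪z, y⟫) ∧ ⟪x, y⟫ < 0 := by
  obtain ⟨y, hy, hxy⟩ :=
    ProperCone.hyperplane_separation' (Submodule.closure (PointedCone.hull ℝ S))
    (by rwa [Submodule.mem_closure_iff, ← SetLike.mem_coe, Submodule.topologicalClosure_coe])
  refine ⟨y, fun z hz => hy z ?_, hxy⟩
  rw [Submodule.mem_closure_iff]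
  exact Submodule.le_topologicalClosure _ (PointedCone.subset_hull hz)

theorem exists_forall_inner_le_neg_of_zero_notMem_convexHull [FiniteDimensional ℝ E] {W : Set E}
    (hW : IsCompact W) (h0 : (0 : E) ∉ convexHull ℝ W) :
    ∃ y, ∃ δ > 0, ∀ w ∈ W, ⟪w, y⟫ ≤ -δ := by
  obtain ⟨f, α, hf, hα⟩ := geometric_hahn_banach_closed_point (convex_convexHull ℝ W)
    (isCompact_convexHull hW).isClosed h0
  refine ⟨(InnerProductSpace.toDual ℝ E).symm f, -α, by simpa using hα, fun w hw => ?_⟩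
  rw [real_inner_comm, InnerProductSpace.toDual_symm_apply]
  linarith [hf w (subset_convexHull ℝ W hw)]

theorem Convex.exists_add_mem_forall_inner_neg [FiniteDimensional ℝ E] {K W : Set E}
    (hK : Convex ℝ K) {z : E} (hz : z ∈ K) (hW : ∀ w ∈ W, ‖w‖ = 1)
    (hnormal : ∀ w : E, ‖w‖ = 1 → (∀ k ∈ K, ⟪w, k⟫ ≤ ⟪w, z⟫) → w ∈ W) {u y : E}
    (hyu : 0 < ⟪u, y⟫) {δ : ℝ} (hδ : 0 < δ) (hyW : ∀ w ∈ W, ⟪w, y⟫ ≤ -δ) :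
    ∃ x, z + x ∈ K ∧ 0 < ⟪u, x⟫ ∧ ∀ w ∈ W, ⟪w, x⟫ < 0 := by
  set S := (z + ·) ⁻¹' K
  -- `y` lies in the closed tangent cone of `K` at `z`: otherwise Farkas' lemma produces
  -- an outer normal of `K` at `z` making an acute angle with `y`
  have hyS : y ∈ closure (PointedCone.hull ℝ S : Set E) := by
    by_contra hy
    obtain ⟨ν, hν, hyν⟩ := exists_inner_neg_of_notMem_closure_hull hy
    have hν0 : ν ≠ 0 := by
      rintro rfl
      simp at hyν
    have hνpos : 0 < ‖ν‖⁻¹ := inv_pos.2 (norm_pos_iff.2 hν0)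
    have hw : -‖ν‖⁻¹ • ν ∈ W := hnormal _ (by simp [norm_smul, hν0]) fun k hk => by
      have := hν (k - z) (by simpa [S] using hk)
      rw [inner_sub_left, real_inner_comm ν k, real_inner_comm ν z] at this
      simp only [real_inner_smul_left]
      nlinarith
    have := hyW _ hw
    rw [real_inner_smul_left, real_inner_comm] at this
    nlinarith
  have hopen : {η | 0 < ⟪u, η⟫} ∩ Metric.ball y δ ∈ 𝓝 y :=
    inter_mem ((isOpen_lt continuous_const (continuous_const.inner continuous_id)).mem_nhds hyu)
      (Metric.ball_mem_nhds y hδ)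
  obtain ⟨_, ⟨hηu, hηy⟩, hηS⟩ := mem_closure_iff_nhds.1
    (closure_mono (PointedCone.coe_hull_subset_convexCone_hull (by simpa [S])) hyS) _ hopen
  obtain ⟨r, hr, x, hx, rfl⟩ :=
    (ConvexCone.mem_hull_of_convex (hK.translate_preimage_right z)).1 hηS
  refine ⟨x, hx, pos_of_mul_pos_right (by simpa [real_inner_smul_right] using hηu) hr.le,
    fun w hw => ?_⟩
  have hclose : ⟪w, r • x - y⟫ < δ := by
    calc ⟪w, r • x - y⟫ ≤ ‖w‖ * ‖r • x - y‖ := real_inner_le_norm _ _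
      _ < δ := by rwa [hW w hw, one_mul, ← dist_eq_norm]
  rw [inner_sub_right, real_inner_smul_right] at hclose
  have := hyW w hw
  exact neg_of_mul_neg_right (by linarith) hr.le

end InnerProductSpace

section Caps

variable {E : Type*} [NormedAddCommGroup E] [InnerProductSpace ℝ E]

def cap (K : Set E) (w : E) (c : ℝ) : Set E := K ∩ {x | c ≤ ⟪w, x⟫}

theorem cap_smul (K : Set E) (w : E) (c : ℝ) {r : ℝ} (hr : 0 < r) :
    cap K (r • w) (r * c) = cap K w c := by
  ext x
  simp only [cap, mem_inter_iff, mem_ofPred_eq, real_inner_smul_left, mul_le_mul_iff_right₀ hr]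

variable [MeasurableSpace E] {μ : Measure E}

theorem measure_le_mul_of_zero_mem_convexHull [FiniteDimensional ℝ E] {K W : Set E} {z : E}
    (h0 : (0 : E) ∈ convexHull ℝ W) {b : ℝ≥0∞} (hb : ∀ w ∈ W, μ (cap K w ⟪w, z⟫) ≤ b) :
    μ K ≤ (Module.finrank ℝ E + 1) * b := by
  obtain ⟨ι, _, y, a, hyW, hy, ha, ha1, hsum⟩ := eq_pos_convex_span_of_mem_convexHull h0
  obtain ⟨i₀⟩ : Nonempty ι := by
    by_contra h
    simp [not_nonempty_iff.1 h] at ha1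
  have hcover : K ⊆ ⋃ i, cap K (y i) ⟪y i, z⟫ := by
    intro x hxK
    by_contra! hx
    have hneg : ∑ i, a i * ⟪y i, x - z⟫ < 0 := by
      refine Finset.sum_neg (fun i _ => mul_neg_of_pos_of_neg (ha i) ?_) ⟨i₀, Finset.mem_univ _⟩
      have : ¬ ⟪y i, z⟫ ≤ ⟪y i, x⟫ := fun h => hx (mem_iUnion.2 ⟨i, hxK, h⟩)
      rw [inner_sub_right]
      linarith
    simp [← real_inner_smul_left, ← sum_inner, hsum] at hneg
  calc μ K ≤ ∑ i, μ (cap K (y i) ⟪y i, z⟫) :=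
        (measure_mono hcover).trans (measure_iUnion_fintype_le _ _)
    _ ≤ Fintype.card ι * b := by
        rw [← nsmul_eq_mul]
        exact Finset.sum_le_card_nsmul _ _ _ fun i _ => hb _ (hyW (mem_range_self i))
    _ ≤ (Module.finrank ℝ E + 1) * b := by
        gcongr
        exact_mod_cast hy.card_le_finrank_succ.trans (Nat.succ_le_succ (Submodule.finrank_le _))

variable [FiniteDimensional ℝ E] [BorelSpace E] [μ.IsAddHaarMeasure]

variable (μ) in
theorem measure_setOf_inner_eq {w : E} (hw : w ≠ 0) (c : ℝ) : μ {x | ⟪w, x⟫ = c} = 0 := by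
  have hsurj : Function.Surjective (innerₛₗ ℝ w) :=
    LinearMap.surjective_of_ne_zero fun h => hw <| by simpa using congr($h w)
  have := (ae_comp_linearMap_mem_iff _ μ volume hsurj (measurableSet_singleton c).compl).2
    (compl_mem_ae_iff.2 (Real.volume_singleton))
  simpa [ae_iff] using this

theorem measure_cap_le_of_tendsto {K : Set E} {w : E} (hw : w ≠ 0) {c : ℝ} {ws : ℕ → E}
    {cs : ℕ → ℝ} (hws : Tendsto ws atTop (𝓝 w)) (hcs : Tendsto cs atTop (𝓝 c)) {b : ℝ≥0∞}
    (hb : ∀ᶠ n in atTop, μ (cap K (ws n) (cs n)) ≤ b) : μ (cap K w c) ≤ b := by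
  obtain ⟨N₀, hN₀⟩ := eventually_atTop.1 hb
  -- a point strictly inside the limit cap lies in all but finitely many of the caps
  set D : ℕ → Set E := fun N => ⋂ n ≥ N, cap K (ws n) (cs n)
  have hD : Monotone D := fun N M hNM => biInter_mono (fun n hn => hNM.trans hn) fun _ _ => le_rfl
  have hsub : cap K w c ⊆ (⋃ N, D N) ∪ {x | ⟪w, x⟫ = c} := by
    rintro x ⟨hxK, hxc⟩
    rcases (show c ≤ ⟪w, x⟫ from hxc).lt_or_eq with hlt | heq
    · have hev : ∀ᶠ n in atTop, cs n < ⟪ws n, x⟫ :=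
        hcs.eventually_lt (hws.inner tendsto_const_nhds) hlt
      obtain ⟨N, hN⟩ := eventually_atTop.1 hev
      exact Or.inl (mem_iUnion.2 ⟨N, mem_iInter₂.2 fun n hn => ⟨hxK, (hN n hn).le⟩⟩)
    · exact Or.inr heq.symm
  calc μ (cap K w c) ≤ μ (⋃ N, D N) + μ {x | ⟪w, x⟫ = c} :=
        (measure_mono hsub).trans (measure_union_le _ _)
    _ = ⨆ N, μ (D N) := by rw [measure_setOf_inner_eq μ hw, add_zero, hD.measure_iUnion]
    _ ≤ b := iSup_le fun N =>
      (measure_mono (biInter_subset_of_mem (le_max_left N N₀))).trans (hN₀ _ (le_max_right _ _))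


variable (μ) in
def capNormals (K : Set E) (z : E) (b : ℝ≥0∞) : Set E :=
  {w | ‖w‖ = 1 ∧ μ (cap K w ⟪w, z⟫) ≤ b}

theorem isCompact_capNormals (K : Set E) (z : E) (b : ℝ≥0∞) : IsCompact (capNormals μ K z b) := by
  refine (isCompact_sphere (0 : E) 1).of_isClosed_subset
    (IsSeqClosed.isClosed fun ws w hws hw => ?_) fun w hw => mem_sphere_zero_iff_norm.2 hw.1
  have hw1 : ‖w‖ = 1 := mem_sphere_zero_iff_norm.1 <|
    Metric.isClosed_sphere.mem_of_tendsto hw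
      (.of_forall fun n => mem_sphere_zero_iff_norm.2 (hws n).1)
  exact ⟨hw1, measure_cap_le_of_tendsto (norm_ne_zero_iff.1 (hw1 ▸ one_ne_zero)) hw
    (hw.inner tendsto_const_nhds) (.of_forall fun n => (hws n).2)⟩

theorem mem_capNormals_of_forall_inner_le {K : Set E} {z w : E} (hw : ‖w‖ = 1)
    (hK : ∀ k ∈ K, ⟪w, k⟫ ≤ ⟪w, z⟫) (b : ℝ≥0∞) : w ∈ capNormals μ K z b := by
  have hnull : μ (cap K w ⟪w, z⟫) = 0 :=
    measure_mono_null (fun x hx => le_antisymm (hK x hx.1) hx.2)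
      (measure_setOf_inner_eq μ (norm_ne_zero_iff.1 (hw ▸ one_ne_zero)) _)
  exact ⟨hw, by rw [hnull]; exact zero_le⟩

theorem measure_cap_le_card_mul_of_mem_hull {K : Set E} {t : Finset E} {v : E}
    (hv : v ∈ PointedCone.hull ℝ (t : Set E)) (hv0 : v ≠ 0) {z : E} {b : ℝ≥0∞}
    (hb : ∀ w ∈ t, μ (cap K w ⟪w, z⟫) ≤ b) : μ (cap K v ⟪v, z⟫) ≤ t.card * b := by
  obtain ⟨f, hf, hfv⟩ := PointedCone.mem_hull_finset_iff.1 hv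
  have hsub : cap K v ⟪v, z⟫ ⊆ (⋃ w ∈ t, cap K w ⟪w, z⟫) ∪ {x | ⟪v, x⟫ = ⟪v, z⟫} := by
    rintro x ⟨hxK, hx⟩
    rcases (show ⟪v, z⟫ ≤ ⟪v, x⟫ from hx).lt_or_eq with hlt | heq
    · have hsum : ∑ w ∈ t, (0 : ℝ) < ∑ w ∈ t, f w * ⟪w, x - z⟫ := by
        simp_rw [Finset.sum_const_zero, ← real_inner_smul_left, ← sum_inner, hfv, inner_sub_right]
        linarith
      obtain ⟨w, hw, hpos⟩ := Finset.exists_lt_of_sum_lt hsum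
      have : 0 < ⟪w, x - z⟫ := pos_of_mul_pos_right hpos (hf w hw)
      rw [inner_sub_right] at this
      exact Or.inl (mem_biUnion hw ⟨hxK, show ⟪w, z⟫ ≤ ⟪w, x⟫ by linarith⟩)
    · exact Or.inr heq.symm
  calc μ (cap K v ⟪v, z⟫) ≤ μ (⋃ w ∈ t, cap K w ⟪w, z⟫) + μ {x | ⟪v, x⟫ = ⟪v, z⟫} :=
        (measure_mono hsub).trans (measure_union_le _ _)
    _ ≤ ∑ w ∈ t, μ (cap K w ⟪w, z⟫) := by
        rw [measure_setOf_inner_eq μ hv0, add_zero]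
        exact measure_biUnion_finset_le _ _
    _ ≤ t.card * b := by simpa using Finset.sum_le_card_nsmul _ _ _ hb

theorem measure_cap_le_finrank_mul_of_mem_closure_hull {K W : Set E} {u z : E}
    (hu : u ∈ closure (PointedCone.hull ℝ W : Set E)) (hu0 : u ≠ 0) {b : ℝ≥0∞}
    (hb : ∀ w ∈ W, μ (cap K w ⟪w, z⟫) ≤ b) : μ (cap K u ⟪u, z⟫) ≤ Module.finrank ℝ E * b := by
  obtain ⟨v, hvW, hvu⟩ := mem_closure_iff_seq_limit.1 hu
  refine measure_cap_le_of_tendsto hu0 hvu (hvu.inner tendsto_const_nhds) ?_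
  filter_upwards [hvu.eventually_ne hu0] with n hn
  obtain ⟨t, htW, htcard, hvt⟩ := PointedCone.exists_finset_card_le_finrank_of_mem_hull (hvW n)
  calc μ (cap K (v n) ⟪v n, z⟫) ≤ t.card * b :=
        measure_cap_le_card_mul_of_mem_hull hvt hn fun w hw => hb w (htW hw)
    _ ≤ Module.finrank ℝ E * b := by gcongr

theorem measure_cap_add_measure_cap_neg_le (K : Set E) {w : E} (hw : w ≠ 0) (c : ℝ) :
    μ (cap K w c) + μ (cap K (-w) (-c)) ≤ μ K := by
  have hH : MeasurableSet {x : E | c ≤ ⟪w, x⟫} :=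
    measurableSet_le measurable_const (continuous_const.inner continuous_id).measurable
  have hsub : cap K (-w) (-c) ⊆ (K \ {x | c ≤ ⟪w, x⟫}) ∪ {x | ⟪w, x⟫ = c} := by
    rintro x ⟨hxK, hx⟩
    rcases (show ⟪w, x⟫ ≤ c by simpa [inner_neg_left] using hx).lt_or_eq with hlt | heq
    · exact Or.inl ⟨hxK, not_le.2 hlt⟩
    · exact Or.inr heq
  calc μ (cap K w c) + μ (cap K (-w) (-c)) ≤ μ (cap K w c) + μ (K \ {x | c ≤ ⟪w, x⟫}) := by
        refine add_le_add_right ((measure_mono hsub).trans ((measure_union_le _ _).trans ?_)) _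
        rw [measure_setOf_inner_eq μ hw, add_zero]
    _ = μ K := measure_inter_add_sdiff K hH

theorem measure_cap_le_finrank_mul_of_zero_mem_convexHull {K : Set E} {u z : E} (hu0 : u ≠ 0)
    {b : ℝ≥0∞} (hb : b ≠ ⊤) (h0 : (0 : E) ∈ convexHull ℝ (capNormals μ K z b))
    (hopp : b ≤ μ (cap K (-u) (-⟪u, z⟫))) : μ (cap K u ⟪u, z⟫) ≤ Module.finrank ℝ E * b := by
  refine (ENNReal.add_le_add_iff_right hb).1 ?_
  calc μ (cap K u ⟪u, z⟫) + b ≤ μ (cap K u ⟪u, z⟫) + μ (cap K (-u) (-⟪u, z⟫)) := by gcongr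
    _ ≤ μ K := measure_cap_add_measure_cap_neg_le K hu0 _
    _ ≤ (Module.finrank ℝ E + 1) * b := measure_le_mul_of_zero_mem_convexHull h0 fun w hw => hw.2
    _ = Module.finrank ℝ E * b + b := by ring

end Caps

section FloatingBody

variable {d : ℕ} {K : Set (EuclideanSpace ℝ (Fin d))}

theorem vfun_le_measure_cap (K : Set (EuclideanSpace ℝ (Fin d)))
    {z w : EuclideanSpace ℝ (Fin d)} (hw : w ≠ 0) {c : ℝ} (hc : c ≤ ⟪w, z⟫) :
    vfun K z ≤ (volume (cap K w c)).toReal :=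
  csInf_le ⟨0, by rintro r ⟨_, _, _, _, rfl⟩; exact ENNReal.toReal_nonneg⟩ ⟨w, c, hw, hc, rfl⟩

theorem exists_cap_of_vfun_lt [Nontrivial (EuclideanSpace ℝ (Fin d))] (hK : volume K ≠ ⊤)
    {s : ℝ} {z x : EuclideanSpace ℝ (Fin d)} (hz : s ≤ vfun K z) (hx : vfun K x < s) :
    ∃ w c, ‖w‖ = 1 ∧ ⟪w, z⟫ < c ∧ c ≤ ⟪w, x⟫ ∧ volume (cap K w c) ≤ ENNReal.ofReal s := by
  obtain ⟨w₀, hw₀⟩ := exists_ne (0 : EuclideanSpace ℝ (Fin d))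
  obtain ⟨_, ⟨w, c, hw, hcx, rfl⟩, hlt⟩ :=
    exists_lt_of_csInf_lt (by exact ⟨_, w₀, _, hw₀, le_rfl, rfl⟩) hx
  have hr : 0 < ‖w‖⁻¹ := inv_pos.2 (norm_pos_iff.2 hw)
  refine ⟨‖w‖⁻¹ • w, ‖w‖⁻¹ * c, by simp [norm_smul, hw], ?_, ?_, ?_⟩
  · by_contra! h
    rw [real_inner_smul_left, mul_le_mul_iff_right₀ hr] at h
    exact absurd (hz.trans (vfun_le_measure_cap K hw h)) (not_le.2 hlt)
  · rw [real_inner_smul_left]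
    exact mul_le_mul_of_nonneg_left hcx hr.le
  · rw [cap_smul K w c hr]
    exact (ENNReal.le_ofReal_iff_toReal_le (ne_top_of_le_ne_top hK (measure_mono inter_subset_left))
      (ENNReal.toReal_nonneg.trans hlt.le)).2 hlt.le

theorem exists_mem_capNormals_inner_nonneg [Nontrivial (EuclideanSpace ℝ (Fin d))]
    (hK : volume K ≠ ⊤) {s : ℝ} {z y : EuclideanSpace ℝ (Fin d)} (hz : s ≤ vfun K z)
    (hy : ∀ n : ℕ, vfun K (z + (n + 1 : ℝ)⁻¹ • y) < s) :
    ∃ w ∈ capNormals volume K z (ENNReal.ofReal s), 0 ≤ ⟪w, y⟫ := by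
  choose w c hw hzc hcx hvol using fun n => exists_cap_of_vfun_lt hK hz (hy n)
  set t : ℕ → ℝ := fun n => (n + 1 : ℝ)⁻¹
  have ht : Tendsto t atTop (𝓝 0) := by
    simpa [t] using tendsto_one_div_add_atTop_nhds_zero_nat (𝕜 := ℝ)
  have hcx' (n : ℕ) : c n ≤ ⟪w n, z⟫ + t n * ⟪w n, y⟫ := by
    simpa [inner_add_right, real_inner_smul_right] using hcx n
  have hgap (n : ℕ) : ‖c n - ⟪w n, z⟫‖ ≤ t n * ‖y‖ := by
    have : ⟪w n, y⟫ ≤ ‖y‖ := by simpa [hw n] using real_inner_le_norm (w n) y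
    rw [Real.norm_eq_abs, abs_of_pos (sub_pos.2 (hzc n))]
    nlinarith [hcx' n, (inv_pos.2 (Nat.cast_add_one_pos n) : 0 < t n)]
  obtain ⟨w₀, hw₀, φ, hφ, hlim⟩ :=
    (isCompact_sphere (0 : EuclideanSpace ℝ (Fin d)) 1).tendsto_subseq fun n =>
      mem_sphere_zero_iff_norm.2 (hw n)
  have hw₀1 : ‖w₀‖ = 1 := mem_sphere_zero_iff_norm.1 hw₀
  have hc : Tendsto (fun n => c (φ n)) atTop (𝓝 ⟪w₀, z⟫) := by
    have hsmall : Tendsto (fun n => c n - ⟪w n, z⟫) atTop (𝓝 0) :=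
      squeeze_zero_norm hgap (by simpa using ht.mul_const ‖y‖)
    simpa using (hlim.inner (tendsto_const_nhds (x := z))).add (hsmall.comp hφ.tendsto_atTop)
  refine ⟨w₀, ⟨hw₀1, measure_cap_le_of_tendsto (norm_ne_zero_iff.1 (hw₀1 ▸ one_ne_zero)) hlim hc
    (.of_forall fun n => hvol (φ n))⟩, ge_of_tendsto' (hlim.inner tendsto_const_nhds) fun n => ?_⟩
  show 0 ≤ ⟪w (φ n), y⟫
  by_contra! hneg
  have : t (φ n) * ⟪w (φ n), y⟫ < 0 :=
    mul_neg_of_pos_of_neg (inv_pos.2 (Nat.cast_add_one_pos _)) hneg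
  linarith [hcx' (φ n), hzc (φ n)]

theorem mem_closure_hull_capNormals [Nontrivial (EuclideanSpace ℝ (Fin d))] (hKconv : Convex ℝ K)
    (hKfin : volume K ≠ ⊤) {s : ℝ} {z u : EuclideanSpace ℝ (Fin d)} (hzK : z ∈ K)
    (hz : s ≤ vfun K z) (htan : ∀ x ∈ K, ⟪u, z⟫ < ⟪u, x⟫ → vfun K x < s)
    (h0 : (0 : EuclideanSpace ℝ (Fin d)) ∉
      convexHull ℝ (capNormals volume K z (ENNReal.ofReal s))) :
    u ∈ closure (PointedCone.hull ℝ (capNormals volume K z (ENNReal.ofReal s)) : Set _) := by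
  set W := capNormals volume K z (ENNReal.ofReal s)
  by_contra hu
  obtain ⟨y, hyW, hyu⟩ := exists_inner_neg_of_notMem_closure_hull hu
  obtain ⟨y₀, δ, hδ, hy₀⟩ := exists_forall_inner_le_neg_of_zero_notMem_convexHull
    (isCompact_capNormals K z _) h0
  -- tilt `-y` towards `y₀`, so that it makes an obtuse angle with every normal in `W`
  have hev : ∀ᶠ ε in 𝓝[>] (0 : ℝ), 0 < ⟪u, -y + ε • y₀⟫ := by
    have hcont : Continuous fun ε : ℝ => ⟪u, -y + ε • y₀⟫ := by fun_prop
    exact nhdsWithin_le_nhds <| (hcont.tendsto' 0 (-⟪u, y⟫) (by simp [inner_neg_right])).eventually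
      (lt_mem_nhds (neg_pos.2 hyu))
  obtain ⟨ε, hεu, hε⟩ := (hev.and self_mem_nhdsWithin).exists
  obtain ⟨x, hxK, hxu, hxW⟩ := hKconv.exists_add_mem_forall_inner_neg hzK (fun w hw => hw.1)
    (fun w hw hK => mem_capNormals_of_forall_inner_le hw hK _) hεu (mul_pos hε hδ) fun w hw => by
      rw [inner_add_right, inner_neg_right, real_inner_smul_right]
      nlinarith [hyW w hw, hy₀ w hw]
  obtain ⟨w, hw, hwx⟩ := exists_mem_capNormals_inner_nonneg hKfin hz fun n => by
    have ht : (n + 1 : ℝ)⁻¹ ∈ Icc (0 : ℝ) 1 :=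
      ⟨by positivity, inv_le_one_of_one_le₀ (by linarith [(n.cast_nonneg : (0 : ℝ) ≤ n)])⟩
    refine htan _ (by simpa using hKconv.add_smul_sub_mem hzK hxK ht) ?_
    rw [inner_add_right, real_inner_smul_right]
    linarith [mul_pos (inv_pos.2 (Nat.cast_add_one_pos n)) hxu]
  exact (hxW w hw).not_ge hwx

end FloatingBody

theorem stmt6_general {d : ℕ} (K : Set (EuclideanSpace ℝ (Fin d)))
    (hKconv : Convex ℝ K)
    (hKvol : volume K = 1)
    (s : ℝ) (hs : 0 < s)
    (u : EuclideanSpace ℝ (Fin d)) (hu : ‖u‖ = 1) (c : ℝ)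
    (htangent : IsGreatest ((fun x => ⟪u, x⟫) '' {z ∈ K | s ≤ vfun K z}) c) :
    s ≤ (volume (K ∩ {x | c ≤ ⟪u, x⟫})).toReal ∧
    (volume (K ∩ {x | c ≤ ⟪u, x⟫})).toReal ≤ d * s := by
  obtain ⟨⟨z, ⟨hzK, hz⟩, rfl⟩, hmax⟩ := htangent
  dsimp only at hmax ⊢
  have hu0 : u ≠ 0 := norm_ne_zero_iff.1 (hu ▸ one_ne_zero)
  have : Nontrivial (EuclideanSpace ℝ (Fin d)) := ⟨⟨u, 0, hu0⟩⟩
  have hKfin : volume K ≠ ⊤ := by simp [hKvol]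
  have htan (x : EuclideanSpace ℝ (Fin d)) (hx : x ∈ K) (hzx : ⟪u, z⟫ < ⟪u, x⟫) : vfun K x < s :=
    not_le.1 fun hsx => (hmax ⟨x, ⟨hx, hsx⟩, rfl⟩).not_gt hzx
  refine ⟨hz.trans (vfun_le_measure_cap K hu0 le_rfl),
    ENNReal.toReal_le_of_le_ofReal (mul_nonneg d.cast_nonneg hs.le) ?_⟩
  rw [ENNReal.ofReal_mul (Nat.cast_nonneg d), ENNReal.ofReal_natCast]
  suffices volume (cap K u ⟪u, z⟫) ≤
      Module.finrank ℝ (EuclideanSpace ℝ (Fin d)) * ENNReal.ofReal s by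
    rwa [finrank_euclideanSpace_fin] at this
  by_cases h0 : (0 : EuclideanSpace ℝ (Fin d)) ∈
      convexHull ℝ (capNormals volume K z (ENNReal.ofReal s))
  · -- the cap opposite to `C` also contains `z`
    exact measure_cap_le_finrank_mul_of_zero_mem_convexHull hu0 ENNReal.ofReal_ne_top h0 <|
      ENNReal.ofReal_le_of_le_toReal <| hz.trans <|
        vfun_le_measure_cap K (neg_ne_zero.2 hu0) (by simp [inner_neg_left])
  · exact measure_cap_le_finrank_mul_of_mem_closure_hull
      (mem_closure_hull_capNormals hKconv hKfin hzK hz htan h0) hu0 fun w hw => hw.2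

/-- If the bounding hyperplane of a cap `C = K ∩ {x : ⟪u,x⟫ ≥ c}` of a convex
body `K` of volume `1` is tangent to the floating body `K(v ≥ s)`, then `s ≤ V(C) ≤ d s`. -/
theorem stmt6 {d : ℕ} (K : Set (EuclideanSpace ℝ (Fin d)))
    (hKconv : Convex ℝ K) (hKcomp : IsCompact K) (hKint : (interior K).Nonempty)
    (hKvol : volume K = 1)
    (s : ℝ) (hs : 0 < s)
    (u : EuclideanSpace ℝ (Fin d)) (hu : ‖u‖ = 1) (c : ℝ)
    (htangent : IsGreatest ((fun x => ⟪u, x⟫) '' {z ∈ K | s ≤ vfun K z}) c) :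
    s ≤ (volume (K ∩ {x | c ≤ ⟪u, x⟫})).toReal ∧
    (volume (K ∩ {x | c ≤ ⟪u, x⟫})).toReal ≤ d * s :=
  stmt6_general K hKconv hKvol s hs u hu c htangent
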